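/- If X is F1-measurable with |X| ≤ C1 a.s. and Y is F2-measurable with |Y| ≤ C2 a.s., then |Cov(X,Y)| ≤ 4 C1 C2 α(F1,F2). -/
import Mathlib


open MeasureTheory

/-- The strong mixing coefficient between two sub-σ-algebras:
`α(F₁,F₂) = sup_{A∈F₁, B∈F₂} |P(A∩B) − P(A)P(B)|`. -/
noncomputable def alphaMix {Ω : Type*} [MeasurableSpace Ω] (P : Measure Ω)
    (m1 m2 : MeasurableSpace Ω) : ℝ :=
  ⨆ (A : {s : Set Ω // MeasurableSet[m1] s}) (B : {s : Set Ω // MeasurableSet[m2] s}),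
    |(P (A.1 ∩ B.1)).toReal - (P A.1).toReal * (P B.1).toReal|

section Aux

variable {Ω : Type*} {m1 m2 : MeasurableSpace Ω} {m : MeasurableSpace Ω}
  {P : Measure Ω}

lemma prob_toReal_le_one [IsProbabilityMeasure P] (S : Set Ω) : (P S).toReal ≤ 1 := by
  have := ENNReal.toReal_mono ENNReal.one_ne_top (prob_le_one (μ := P) (s := S))
  simpa using this

lemma alpha_term_le_one [IsProbabilityMeasure P] (A B : Set Ω) :
    |(P (A ∩ B)).toReal - (P A).toReal * (P B).toReal| ≤ 1 := by
  have h1 := prob_toReal_le_one (P := P) (A ∩ B)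
  have h2 := prob_toReal_le_one (P := P) A
  have h3 := prob_toReal_le_one (P := P) B
  have h4 : (0:ℝ) ≤ (P (A ∩ B)).toReal := ENNReal.toReal_nonneg
  have h5 : (0:ℝ) ≤ (P A).toReal := ENNReal.toReal_nonneg
  have h6 : (0:ℝ) ≤ (P B).toReal := ENNReal.toReal_nonneg
  rw [abs_le]
  constructor <;> nlinarith

lemma le_alphaMix [IsProbabilityMeasure P] {S T : Set Ω}
    (hS : MeasurableSet[m1] S) (hT : MeasurableSet[m2] T) :
    |(P (S ∩ T)).toReal - (P S).toReal * (P T).toReal| ≤ alphaMix P m1 m2 := by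
  haveI : Nonempty {s : Set Ω // MeasurableSet[m2] s} :=
    ⟨⟨∅, @MeasurableSet.empty _ m2⟩⟩
  set F : {s : Set Ω // MeasurableSet[m1] s} → {t : Set Ω // MeasurableSet[m2] t} → ℝ :=
    fun A B => |(P (A.1 ∩ B.1)).toReal - (P A.1).toReal * (P B.1).toReal| with hF
  have hbd : ∀ A, BddAbove (Set.range (F A)) := by
    intro A
    refine ⟨1, ?_⟩
    rintro x ⟨B, rfl⟩
    exact alpha_term_le_one _ _
  have step1 : F ⟨S, hS⟩ ⟨T, hT⟩ ≤ ⨆ B, F ⟨S, hS⟩ B := le_ciSup (hbd _) _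
  have hbd2 : BddAbove (Set.range fun A => ⨆ B, F A B) := by
    refine ⟨1, ?_⟩
    rintro x ⟨A, rfl⟩
    exact ciSup_le fun B => alpha_term_le_one _ _
  have step2 : (⨆ B, F ⟨S, hS⟩ B) ≤ alphaMix P m1 m2 := le_ciSup hbd2 _
  exact step1.trans step2

lemma integrable_of_ae_bounded [IsFiniteMeasure P] {Z : Ω → ℝ} {E : ℝ}
    (hZ : AEStronglyMeasurable Z P) (hb : ∀ᵐ ω ∂P, |Z ω| ≤ E) : Integrable Z P := by
  refine Integrable.mono' (integrable_const E) hZ ?_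
  filter_upwards [hb] with ω h
  rwa [Real.norm_eq_abs]

/-- Key conditional-expectation identity: for `W` which is `m1`-measurable,
`∫ W ⬝ E[Z|m1] = ∫ W ⬝ Z`. -/
lemma integral_mul_condexp (hm1 : m1 ≤ m) [IsProbabilityMeasure P] {W Z : Ω → ℝ}
    (hW : StronglyMeasurable[m1] W) (hZint : Integrable Z P)
    (hWZ : Integrable (fun ω => W ω * Z ω) P) :
    ∫ ω, W ω * (P[Z|m1]) ω ∂P = ∫ ω, W ω * Z ω ∂P := by
  haveI : SigmaFinite (P.trim hm1) := inferInstance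
  have hWZ' : Integrable (W * Z) P := hWZ
  have h := condExp_mul_of_stronglyMeasurable_left hW hWZ' hZint
  have h1 : ∫ ω, (P[W * Z|m1]) ω ∂P = ∫ ω, (W * P[Z|m1]) ω ∂P := integral_congr_ae h
  have h2 : ∫ ω, (P[W * Z|m1]) ω ∂P = ∫ ω, (W * Z) ω ∂P := integral_condExp hm1
  simp only [Pi.mul_apply] at h1 h2
  rw [← h1, h2]

/-- Reduction step: the covariance of a bounded `m1`-measurable `W` against `Z` is
bounded by `D` times the covariance of a `±1``-valued `m1`-measurable function against `Z`. -/
lemma cov_reduce (hm1 : m1 ≤ m) [IsProbabilityMeasure P] {W Z : Ω → ℝ} {D E : ℝ}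
    (hW : Measurable[m1] W) (hWb : ∀ᵐ ω ∂P, |W ω| ≤ D)
    (hZm : AEStronglyMeasurable Z P) (hZb : ∀ᵐ ω ∂P, |Z ω| ≤ E) :
    ∃ f : Ω → ℝ, ∃ A B : Set Ω, MeasurableSet[m1] A ∧ MeasurableSet[m1] B ∧
      (∀ ω, f ω = A.indicator 1 ω - B.indicator 1 ω) ∧
      |(∫ ω, W ω * Z ω ∂P) - (∫ ω, W ω ∂P) * ∫ ω, Z ω ∂P|
        ≤ D * ((∫ ω, f ω * Z ω ∂P) - (∫ ω, f ω ∂P) * ∫ ω, Z ω ∂P) := by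
  haveI : SigmaFinite (P.trim hm1) := inferInstance
  set c : ℝ := ∫ ω, Z ω ∂P with hc
  set g : Ω → ℝ := P[Z|m1] with hg
  set h : Ω → ℝ := fun ω => g ω - c with hh
  have hgsm : StronglyMeasurable[m1] g := stronglyMeasurable_condExp
  have hhm : Measurable[m1] h := (hgsm.measurable.sub measurable_const)
  set A : Set Ω := {ω | 0 < h ω} with hA
  set B : Set Ω := {ω | h ω < 0} with hB
  have hAm : MeasurableSet[m1] A := measurableSet_lt (@measurable_const ℝ Ω _ m1 0) hhm
  have hBm : MeasurableSet[m1] B := measurableSet_lt hhm (@measurable_const ℝ Ω _ m1 0)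
  set f : Ω → ℝ := fun ω => A.indicator 1 ω - B.indicator 1 ω with hf
  have hfval : ∀ ω, f ω = A.indicator 1 ω - B.indicator 1 ω := fun ω => rfl
  -- pointwise facts about f
  have hfh : ∀ ω, f ω * h ω = |h ω| := by
    intro ω
    rcases lt_trichotomy (h ω) 0 with hlt | heq | hgt
    · have h1 : ω ∉ A := by simp [hA, Set.mem_setOf_eq]; linarith
      have h2 : ω ∈ B := hlt
      simp [hf, Set.indicator_of_notMem h1, Set.indicator_of_mem h2, abs_of_neg hlt]
    · have h1 : ω ∉ A := by simp [hA, Set.mem_setOf_eq, heq]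
      have h2 : ω ∉ B := by simp [hB, Set.mem_setOf_eq, heq]
      simp [hf, Set.indicator_of_notMem h1, Set.indicator_of_notMem h2, heq]
    · have h1 : ω ∈ A := hgt
      have h2 : ω ∉ B := by simp [hB, Set.mem_setOf_eq]; linarith
      simp [hf, Set.indicator_of_mem h1, Set.indicator_of_notMem h2, abs_of_pos hgt]
  have hfbd : ∀ ω, |f ω| ≤ 1 := by
    intro ω
    rw [hfval]
    by_cases h1 : ω ∈ A <;> by_cases h2 : ω ∈ B <;>
      simp [Set.indicator_of_mem, Set.indicator_of_notMem, h1, h2]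
  have hfm1 : Measurable[m1] f :=
    ((@measurable_const ℝ Ω _ m1 1).indicator hAm).sub
      ((@measurable_const ℝ Ω _ m1 1).indicator hBm)
  have hfm : Measurable f := hfm1.mono hm1 le_rfl
  have hWm : AEStronglyMeasurable W P := (hW.mono hm1 le_rfl).aestronglyMeasurable
  -- integrabilities
  have hZint : Integrable Z P := integrable_of_ae_bounded hZm hZb
  have hWZint : Integrable (fun ω => W ω * Z ω) P := by
    refine Integrable.bdd_mul (c := D) hZint hWm ?_
    filter_upwards [hWb] with ω hω
    rwa [Real.norm_eq_abs]
  have hgint : Integrable g P := integrable_condExp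
  have hhint : Integrable h P := hgint.sub (integrable_const c)
  have hWgint : Integrable (fun ω => W ω * g ω) P := by
    refine Integrable.bdd_mul (c := D) hgint hWm ?_
    filter_upwards [hWb] with ω hω
    rwa [Real.norm_eq_abs]
  have hWhint : Integrable (fun ω => W ω * h ω) P := by
    have : (fun ω => W ω * h ω) = fun ω => W ω * g ω - W ω * c := by
      funext ω; simp [hh]; ring
    rw [this]
    exact hWgint.sub ((integrable_const c).bdd_mul (c := D) hWm
      (by filter_upwards [hWb] with ω hω; rwa [Real.norm_eq_abs]))
  have hfZint : Integrable (fun ω => f ω * Z ω) P := by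
    refine Integrable.bdd_mul (c := 1) hZint hfm.aestronglyMeasurable ?_
    exact Filter.Eventually.of_forall fun ω => by rw [Real.norm_eq_abs]; exact hfbd ω
  have hfgint : Integrable (fun ω => f ω * g ω) P := by
    refine Integrable.bdd_mul (c := 1) hgint hfm.aestronglyMeasurable ?_
    exact Filter.Eventually.of_forall fun ω => by rw [Real.norm_eq_abs]; exact hfbd ω
  -- covariance identity for W
  have covW : (∫ ω, W ω * Z ω ∂P) - (∫ ω, W ω ∂P) * c = ∫ ω, W ω * h ω ∂P := by
    have e1 : ∫ ω, W ω * Z ω ∂P = ∫ ω, W ω * g ω ∂P :=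
      (integral_mul_condexp hm1 hW.stronglyMeasurable hZint hWZint).symm
    have e2 : ∫ ω, W ω * h ω ∂P = ∫ ω, (W ω * g ω - W ω * c) ∂P := by
      congr 1; funext ω; simp [hh]; ring
    have e3 : ∫ ω, (W ω * g ω - W ω * c) ∂P
        = (∫ ω, W ω * g ω ∂P) - ∫ ω, W ω * c ∂P :=
      integral_sub hWgint ((integrable_const c).bdd_mul (c := D) hWm
        (by filter_upwards [hWb] with ω hω; rwa [Real.norm_eq_abs]))
    have e4 : ∫ ω, W ω * c ∂P = (∫ ω, W ω ∂P) * c := integral_mul_const c W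
    rw [e1, e2, e3, e4]
  -- covariance identity for f
  have covf : (∫ ω, f ω * Z ω ∂P) - (∫ ω, f ω ∂P) * c = ∫ ω, f ω * h ω ∂P := by
    have e1 : ∫ ω, f ω * Z ω ∂P = ∫ ω, f ω * g ω ∂P :=
      (integral_mul_condexp hm1 (hfm1.stronglyMeasurable) hZint hfZint).symm
    have e2 : ∫ ω, f ω * h ω ∂P = ∫ ω, (f ω * g ω - f ω * c) ∂P := by
      congr 1; funext ω; simp [hh]; ring
    have e3 : ∫ ω, (f ω * g ω - f ω * c) ∂P
        = (∫ ω, f ω * g ω ∂P) - ∫ ω, f ω * c ∂P :=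
      integral_sub hfgint ((integrable_const c).bdd_mul (c := 1) hfm.aestronglyMeasurable
        (Filter.Eventually.of_forall fun ω => by rw [Real.norm_eq_abs]; exact hfbd ω))
    have e4 : ∫ ω, f ω * c ∂P = (∫ ω, f ω ∂P) * c := integral_mul_const c f
    rw [e1, e2, e3, e4]
  -- the main bound
  refine ⟨f, A, B, hAm, hBm, hfval, ?_⟩
  rw [covW, covf]
  have b1 : |∫ ω, W ω * h ω ∂P| ≤ ∫ ω, |W ω * h ω| ∂P := by
    simpa only [Real.norm_eq_abs] using
      norm_integral_le_integral_norm (μ := P) (fun ω => W ω * h ω)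
  have b2 : ∫ ω, |W ω * h ω| ∂P ≤ ∫ ω, D * |h ω| ∂P := by
    refine integral_mono_ae hWhint.abs (hhint.abs.const_mul D) ?_
    filter_upwards [hWb] with ω hω
    rw [abs_mul]
    exact mul_le_mul_of_nonneg_right hω (abs_nonneg _)
  have b3 : ∫ ω, D * |h ω| ∂P = D * ∫ ω, |h ω| ∂P := integral_const_mul D _
  have b4 : ∫ ω, |h ω| ∂P = ∫ ω, f ω * h ω ∂P := by
    congr 1; funext ω; rw [hfh ω]
  calc |∫ ω, W ω * h ω ∂P| ≤ ∫ ω, |W ω * h ω| ∂P := b1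
    _ ≤ ∫ ω, D * |h ω| ∂P := b2
    _ = D * ∫ ω, |h ω| ∂P := b3
    _ = D * ∫ ω, f ω * h ω ∂P := by rw [b4]

/-- Covariance bound for differences of indicators. -/
lemma cov_indicator_bound (hm1 : m1 ≤ m) (hm2 : m2 ≤ m) [IsProbabilityMeasure P]
    {A B A' B' : Set Ω} (hA : MeasurableSet[m1] A) (hB : MeasurableSet[m1] B)
    (hA' : MeasurableSet[m2] A') (hB' : MeasurableSet[m2] B') :
    |(∫ ω, (A.indicator 1 ω - B.indicator 1 ω) * (A'.indicator 1 ω - B'.indicator 1 ω) ∂P)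
        - (∫ ω, A.indicator 1 ω - B.indicator 1 ω ∂P)
          * ∫ ω, A'.indicator 1 ω - B'.indicator 1 ω ∂P|
      ≤ 4 * alphaMix P m1 m2 := by
  have hmul : ∀ (S T : Set Ω) (ω : Ω),
      S.indicator (1 : Ω → ℝ) ω * T.indicator 1 ω = (S ∩ T).indicator 1 ω := by
    intro S T ω
    rw [Set.inter_indicator_one]
    rfl
  have hint : ∀ (S : Set Ω), MeasurableSet S → Integrable (S.indicator (1 : Ω → ℝ)) P :=
    fun S hS => (integrable_const (1:ℝ)).indicator hS
  have hival : ∀ (S : Set Ω), MeasurableSet S →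
      ∫ ω, S.indicator (1 : Ω → ℝ) ω ∂P = (P S).toReal := fun S hS =>
    integral_indicator_one hS
  have hAm := hm1 A hA
  have hBm := hm1 B hB
  have hA'm := hm2 A' hA'
  have hB'm := hm2 B' hB'
  -- expand the product integral
  have eprod : ∫ ω, (A.indicator 1 ω - B.indicator 1 ω)
      * (A'.indicator 1 ω - B'.indicator 1 ω) ∂P
      = (P (A ∩ A')).toReal - (P (A ∩ B')).toReal
        - (P (B ∩ A')).toReal + (P (B ∩ B')).toReal := by
    have e1 : ∀ ω, (A.indicator (1:Ω→ℝ) ω - B.indicator 1 ω)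
        * (A'.indicator 1 ω - B'.indicator 1 ω)
        = (A ∩ A').indicator 1 ω - (A ∩ B').indicator 1 ω
          - (B ∩ A').indicator 1 ω + (B ∩ B').indicator 1 ω := by
      intro ω
      rw [← hmul A A' ω, ← hmul A B' ω, ← hmul B A' ω, ← hmul B B' ω]
      ring
    rw [integral_congr_ae (Filter.Eventually.of_forall e1)]
    have hI1 : Integrable (fun ω => (A ∩ A').indicator (1:Ω→ℝ) ω
        - (A ∩ B').indicator 1 ω - (B ∩ A').indicator 1 ω) P :=
      ((hint _ (hAm.inter hA'm)).sub (hint _ (hAm.inter hB'm))).sub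
        (hint _ (hBm.inter hA'm))
    have hI2 : Integrable (fun ω => (A ∩ A').indicator (1:Ω→ℝ) ω
        - (A ∩ B').indicator 1 ω) P :=
      (hint _ (hAm.inter hA'm)).sub (hint _ (hAm.inter hB'm))
    rw [integral_add hI1 (hint _ (hBm.inter hB'm)),
      integral_sub hI2 (hint _ (hBm.inter hA'm)),
      integral_sub (hint _ (hAm.inter hA'm)) (hint _ (hAm.inter hB'm)),
      hival _ (hAm.inter hA'm), hival _ (hAm.inter hB'm),
      hival _ (hBm.inter hA'm), hival _ (hBm.inter hB'm)]
  have eA : ∫ ω, A.indicator (1:Ω→ℝ) ω - B.indicator 1 ω ∂P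
      = (P A).toReal - (P B).toReal := by
    rw [integral_sub (hint _ hAm) (hint _ hBm), hival _ hAm, hival _ hBm]
  have eB : ∫ ω, A'.indicator (1:Ω→ℝ) ω - B'.indicator 1 ω ∂P
      = (P A').toReal - (P B').toReal := by
    rw [integral_sub (hint _ hA'm) (hint _ hB'm), hival _ hA'm, hival _ hB'm]
  rw [eprod, eA, eB]
  set d1 : ℝ := (P (A ∩ A')).toReal - (P A).toReal * (P A').toReal with hd1
  set d2 : ℝ := (P (A ∩ B')).toReal - (P A).toReal * (P B').toReal with hd2
  set d3 : ℝ := (P (B ∩ A')).toReal - (P B).toReal * (P A').toReal with hd3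
  set d4 : ℝ := (P (B ∩ B')).toReal - (P B).toReal * (P B').toReal with hd4
  have key : (P (A ∩ A')).toReal - (P (A ∩ B')).toReal - (P (B ∩ A')).toReal
      + (P (B ∩ B')).toReal
      - ((P A).toReal - (P B).toReal) * ((P A').toReal - (P B').toReal)
      = d1 - d2 - d3 + d4 := by
    rw [hd1, hd2, hd3, hd4]; ring
  rw [key]
  have b1 := abs_le.mp (le_alphaMix (P := P) hA hA')
  have b2 := abs_le.mp (le_alphaMix (P := P) hA hB')
  have b3 := abs_le.mp (le_alphaMix (P := P) hB hA')
  have b4 := abs_le.mp (le_alphaMix (P := P) hB hB')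
  rw [abs_le]
  constructor <;> · simp only [hd1, hd2, hd3, hd4] at *; linarith [b1.1, b1.2, b2.1, b2.2, b3.1, b3.2, b4.1, b4.2]

end Aux

/-- Covariance inequality for strong mixing: if `X` is `F1`-measurable with `|X| ≤ C1` a.s.
and `Y` is `F2`-measurable with `|Y| ≤ C2` a.s., then
`|Cov(X,Y)| ≤ 4 C1 C2 α(F1,F2)`. -/
theorem abs_cov_le_four_mul_alphaMix {Ω : Type*} {m : MeasurableSpace Ω}
    (m1 m2 : MeasurableSpace Ω) (hm1 : m1 ≤ m) (hm2 : m2 ≤ m)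
    (P : @Measure Ω m) (hP : @IsProbabilityMeasure Ω m P)
    (X Y : Ω → ℝ) (C1 C2 : ℝ)
    (hX : @Measurable Ω ℝ m1 _ X) (hY : @Measurable Ω ℝ m2 _ Y)
    (hXb : ∀ᵐ ω ∂P, |X ω| ≤ C1) (hYb : ∀ᵐ ω ∂P, |Y ω| ≤ C2) :
    |∫ ω, X ω * Y ω ∂P - (∫ ω, X ω ∂P) * (∫ ω, Y ω ∂P)|
      ≤ 4 * C1 * C2 * @alphaMix Ω m P m1 m2 := by
  letI : MeasurableSpace Ω := m
  haveI := hP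
  haveI : (ae P).NeBot := ae_neBot.2 (IsProbabilityMeasure.ne_zero P)
  obtain ⟨ω1, hω1⟩ := hXb.exists
  have hC1 : (0:ℝ) ≤ C1 := (abs_nonneg _).trans hω1
  obtain ⟨ω2, hω2⟩ := hYb.exists
  have hC2 : (0:ℝ) ≤ C2 := (abs_nonneg _).trans hω2
  have hYm : AEStronglyMeasurable Y P := (hY.mono hm2 le_rfl).aestronglyMeasurable
  obtain ⟨f1, A1, B1, hA1, hB1, hf1val, hbound1⟩ :=
    cov_reduce hm1 hX hXb hYm hYb
  have hf1m1 : Measurable[m1] f1 := by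
    have : f1 = fun ω => A1.indicator 1 ω - B1.indicator 1 ω := funext hf1val
    rw [this]
    exact ((@measurable_const ℝ Ω _ m1 1).indicator hA1).sub
      ((@measurable_const ℝ Ω _ m1 1).indicator hB1)
  have hf1m : AEStronglyMeasurable f1 P := (hf1m1.mono hm1 le_rfl).aestronglyMeasurable
  have hf1bd : ∀ᵐ ω ∂P, |f1 ω| ≤ 1 := by
    refine Filter.Eventually.of_forall fun ω => ?_
    rw [hf1val]
    by_cases h1 : ω ∈ A1 <;> by_cases h2 : ω ∈ B1 <;>
      simp [Set.indicator_of_mem, Set.indicator_of_notMem, h1, h2]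
  obtain ⟨f2, A2, B2, hA2, hB2, hf2val, hbound2⟩ :=
    cov_reduce hm2 hY hYb hf1m hf1bd
  -- bound the innermost covariance by 4α
  have hcore : |(∫ ω, f2 ω * f1 ω ∂P) - (∫ ω, f2 ω ∂P) * ∫ ω, f1 ω ∂P|
      ≤ 4 * alphaMix P m1 m2 := by
    have e1 : ∫ ω, f2 ω * f1 ω ∂P
        = ∫ ω, (A1.indicator 1 ω - B1.indicator 1 ω)
            * (A2.indicator 1 ω - B2.indicator 1 ω) ∂P := by
      congr 1; funext ω; rw [hf1val, hf2val]; ring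
    have e2 : ∫ ω, f1 ω ∂P = ∫ ω, A1.indicator 1 ω - B1.indicator 1 ω ∂P := by
      congr 1; funext ω; rw [hf1val]
    have e3 : ∫ ω, f2 ω ∂P = ∫ ω, A2.indicator 1 ω - B2.indicator 1 ω ∂P := by
      congr 1; funext ω; rw [hf2val]
    rw [e1, e2, e3, mul_comm (∫ ω, A2.indicator 1 ω - B2.indicator 1 ω ∂P)]
    exact cov_indicator_bound hm1 hm2 hA1 hB1 hA2 hB2
  have hα : (0:ℝ) ≤ alphaMix P m1 m2 := by
    have := le_alphaMix (P := P) (@MeasurableSet.empty _ m1) (@MeasurableSet.empty _ m2)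
    exact (abs_nonneg _).trans this
  -- chain the bounds
  have step2 : (∫ ω, f1 ω * Y ω ∂P) - (∫ ω, f1 ω ∂P) * ∫ ω, Y ω ∂P
      ≤ C2 * (4 * alphaMix P m1 m2) := by
    have sym : (∫ ω, f1 ω * Y ω ∂P) - (∫ ω, f1 ω ∂P) * ∫ ω, Y ω ∂P
        = (∫ ω, Y ω * f1 ω ∂P) - (∫ ω, Y ω ∂P) * ∫ ω, f1 ω ∂P := by
      rw [mul_comm (∫ ω, f1 ω ∂P)]
      congr 1
      congr 1
      funext ω
      ring
    have h1 : (∫ ω, Y ω * f1 ω ∂P) - (∫ ω, Y ω ∂P) * ∫ ω, f1 ω ∂P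
        ≤ |(∫ ω, Y ω * f1 ω ∂P) - (∫ ω, Y ω ∂P) * ∫ ω, f1 ω ∂P| := le_abs_self _
    have h2 : (∫ ω, f2 ω * f1 ω ∂P) - (∫ ω, f2 ω ∂P) * ∫ ω, f1 ω ∂P
        ≤ 4 * alphaMix P m1 m2 := (le_abs_self _).trans hcore
    have h3 : C2 * ((∫ ω, f2 ω * f1 ω ∂P) - (∫ ω, f2 ω ∂P) * ∫ ω, f1 ω ∂P)
        ≤ C2 * (4 * alphaMix P m1 m2) := mul_le_mul_of_nonneg_left h2 hC2
    rw [sym]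
    exact h1.trans (hbound2.trans h3)
  have step1 : |∫ ω, X ω * Y ω ∂P - (∫ ω, X ω ∂P) * (∫ ω, Y ω ∂P)|
      ≤ C1 * (C2 * (4 * alphaMix P m1 m2)) :=
    hbound1.trans (mul_le_mul_of_nonneg_left step2 hC1)
  calc |∫ ω, X ω * Y ω ∂P - (∫ ω, X ω ∂P) * (∫ ω, Y ω ∂P)|
      ≤ C1 * (C2 * (4 * alphaMix P m1 m2)) := step1
    _ = 4 * C1 * C2 * alphaMix P m1 m2 := by ring
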